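/- Let d ≥ 2, let K be a pure (d−1)-dimensional simplicial complex on [n], let p : [n] → ℝ^{d−1} be any map, and let z be a real-valued (d−1)-chain of K with ∂z = 0. Then 𝔙(K,p)·z = 0; that is, for every vertex v ∈ [n] and every i ∈ {1,…,d−1}, the sum over all (d−1)-faces σ of K of 𝔙(K,p)_{(v,i),σ}·z_σ equals 0. -/

import Mathlib

open scoped BigOperators

section Defs

variable {α : Type*}

/-- A family of finite sets is a simplicial complex if it is closed under taking subsets. -/
def IsComplex (K : Finset (Finset α)) : Prop :=
  ∀ σ ∈ K, ∀ τ ⊆ σ, τ ∈ K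

/-- `K` is pure with all facets of cardinality `d` (i.e. pure `(d-1)`-dimensional). -/
def PureCx (d : ℕ) (K : Finset (Finset α)) : Prop :=
  (∀ σ ∈ K, σ.card ≤ d) ∧ ∀ σ ∈ K, ∃ τ ∈ K, σ ⊆ τ ∧ τ.card = d

/-- `K` is `(d-1)`-dimensional: the largest faces have `d` elements. -/
def DimPred (d : ℕ) (K : Finset (Finset α)) : Prop :=
  (∀ σ ∈ K, σ.card ≤ d) ∧ ∃ σ ∈ K, σ.card = d

/-- The increasing embedding of `Fin (d-1)` into `Fin d` skipping `r`. -/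
def skipF {d : ℕ} (r : Fin d) (k : Fin (d - 1)) : Fin d :=
  if (k : ℕ) < (r : ℕ) then ⟨(k : ℕ), by have := k.isLt; omega⟩
  else ⟨(k : ℕ) + 1, by have := k.isLt; omega⟩

/-- The cofactor `C_{r,c}(M)` (0-indexed). -/
noncomputable def cofactor {d : ℕ} (M : Matrix (Fin d) (Fin d) ℝ) (r c : Fin d) : ℝ :=
  (-1 : ℝ) ^ ((r : ℕ) + (c : ℕ)) * (M.submatrix (skipF r) (skipF c)).det

/-- The matrix `M_{p,σ}` whose `j`-th column is `(p(v_j), 1)`, `v_j` the `j`-th smallest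
element of `σ`. -/
noncomputable def faceMat [LinearOrder α] (d : ℕ) (p : α → Fin (d - 1) → ℝ)
    (σ : Finset α) (hσ : σ.card = d) : Matrix (Fin d) (Fin d) ℝ :=
  fun i j => if h : (i : ℕ) < d - 1 then p (σ.orderEmbOfFin hσ j) ⟨i, h⟩ else 1

/-- The volume-rigidity matrix `𝔙(K,p)`. -/
noncomputable def volMatrix [LinearOrder α] (d : ℕ) (K : Finset (Finset α))
    (p : α → Fin (d - 1) → ℝ) :
    Matrix (α × Fin (d - 1)) {σ : Finset α // σ ∈ K ∧ σ.card = d} ℝ :=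
  fun vi σ =>
    if h : vi.1 ∈ σ.1 then
      cofactor (faceMat d p σ.1 σ.2.2) (Fin.castLE (Nat.sub_le d 1) vi.2)
        ((σ.1.orderIsoOfFin σ.2.2).symm ⟨vi.1, h⟩)
    else 0

/-- `p : V → ℝ^{d-1}` is generic: its coordinates are algebraically independent over `ℚ`. -/
def GenericEmb (d : ℕ) (V : Finset α) (p : α → Fin (d - 1) → ℝ) : Prop :=
  AlgebraicIndependent ℚ (fun x : {a // a ∈ V} × Fin (d - 1) => p x.1.1 x.2)

/-- `K`, with vertex set `V`, is volume-rigid. -/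
def VolumeRigid [Fintype α] [LinearOrder α] (d : ℕ) (V : Finset α)
    (K : Finset (Finset α)) : Prop :=
  ∀ p : α → Fin (d - 1) → ℝ, GenericEmb d V p →
    (volMatrix d K p).rank = (d - 1) * V.card - (d ^ 2 - d - 1)

/-- `sign(τ,σ) = (-1)^j` where the unique element of `σ \ τ` is the `j`-th smallest
element of `σ` (1-based). -/
def faceSgn [LinearOrder α] (τ σ : Finset α) : ℤ :=
  if h : (σ \ τ).card = 1 then
    (-1 : ℤ) ^
      (((σ.sort (· ≤ ·)).idxOf ((σ \ τ).min' (Finset.card_pos.mp (by omega)))) + 1)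
  else 0

/-- The boundary of the integral `(d-1)`-chain `z` of `K` vanishes. -/
def BoundaryZeroZ [LinearOrder α] (d : ℕ) (K : Finset (Finset α)) (z : Finset α → ℤ) : Prop :=
  ∀ τ : Finset α, τ.card = d - 1 →
    ∑ σ ∈ K.filter (fun σ => σ.card = d ∧ τ ⊆ σ), faceSgn τ σ * z σ = 0

/-- The boundary of the real `(d-1)`-chain `z` of `K` vanishes. -/
def BoundaryZeroR [LinearOrder α] (d : ℕ) (K : Finset (Finset α)) (z : Finset α → ℝ) : Prop :=
  ∀ τ : Finset α, τ.card = d - 1 →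
    ∑ σ ∈ K.filter (fun σ => σ.card = d ∧ τ ⊆ σ), (faceSgn τ σ : ℝ) * z σ = 0

/-- `K` is a minimal cycle over `ℤ`. -/
def IsMinimalCycleZ [LinearOrder α] (d : ℕ) (K : Finset (Finset α)) : Prop :=
  (∃ z : Finset α → ℤ, (∀ σ, ¬(σ ∈ K ∧ σ.card = d) → z σ = 0) ∧
      BoundaryZeroZ d K z ∧ ∀ σ ∈ K, σ.card = d → z σ ≠ 0) ∧
  ∀ z : Finset α → ℤ, (∀ σ, ¬(σ ∈ K ∧ σ.card = d) → z σ = 0) →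
    BoundaryZeroZ d K z → z ≠ 0 → ∀ σ ∈ K, σ.card = d → z σ ≠ 0

/-- `K` is `(d-1, d²-d-1)`-sparse on vertex set `V`. -/
def Sparse [DecidableEq α] (d : ℕ) (V : Finset α) (K : Finset (Finset α)) : Prop :=
  ∀ A ⊆ V, d ≤ A.card →
    (K.filter (fun σ => σ.card = d ∧ σ ⊆ A)).card ≤ (d - 1) * A.card - (d ^ 2 - d - 1)

/-- `K` is `(d-1, d²-d-1)`-tight on vertex set `V`. -/
def Tight [DecidableEq α] (d : ℕ) (V : Finset α) (K : Finset (Finset α)) : Prop :=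
  Sparse d V K ∧
    (K.filter (fun σ => σ.card = d)).card = (d - 1) * V.card - (d ^ 2 - d - 1)

end Defs

section Shifting

/-- The partial order `σ ≤_p τ`: equal cardinalities and the `i`-th smallest element of `σ`
is at most the `i`-th smallest element of `τ`, for every `i`. -/
def pLE {n : ℕ} (σ τ : Finset (Fin n)) : Prop :=
  List.Forall₂ (· ≤ ·) (σ.sort (· ≤ ·)) (τ.sort (· ≤ ·))

/-- The strict partial order `σ <_p τ`. -/
def pLT {n : ℕ} (σ τ : Finset (Fin n)) : Prop := pLE σ τ ∧ σ ≠ τ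

/-- `f_σ = f_{σ_1} ∧ ⋯ ∧ f_{σ_k}` in the exterior algebra of `ℝ^n`. -/
noncomputable def extWedge {n : ℕ} (f : Fin n → (Fin n → ℝ)) (σ : Finset (Fin n)) :
    ExteriorAlgebra ℝ (Fin n → ℝ) :=
  ((σ.sort (· ≤ ·)).map (fun i => ExteriorAlgebra.ι ℝ (f i))).prod

/-- The standard basis of `ℝ^n`. -/
noncomputable def stdVec (n : ℕ) : Fin n → (Fin n → ℝ) := fun i => Pi.single i 1

/-- The subspace spanned by `{e_τ : τ ∉ K, |τ| = k}`. -/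
noncomputable def faceIdeal {n : ℕ} (K : Finset (Finset (Fin n))) (k : ℕ) :
    Submodule ℝ (ExteriorAlgebra ℝ (Fin n → ℝ)) :=
  Submodule.span ℝ
    {x | ∃ τ : Finset (Fin n), τ ∉ K ∧ τ.card = k ∧ x = extWedge (stdVec n) τ}

/-- The quotient map `q`. -/
noncomputable def qMap {n : ℕ} (K : Finset (Finset (Fin n))) (k : ℕ) :
    ExteriorAlgebra ℝ (Fin n → ℝ) → ExteriorAlgebra ℝ (Fin n → ℝ) ⧸ faceIdeal K k :=
  fun x => Submodule.Quotient.mk x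

/-- The shifted family `Δ^<(K)` associated with a strict order `lt` on subsets of `[n]`,
computed with respect to the basis `f`. -/
def DeltaLt {n : ℕ} (K : Finset (Finset (Fin n))) (f : Fin n → (Fin n → ℝ))
    (lt : Finset (Fin n) → Finset (Fin n) → Prop) : Set (Finset (Fin n)) :=
  {σ | qMap K σ.card (extWedge f σ) ∉
    Submodule.span ℝ (qMap K σ.card '' (extWedge f '' {τ | lt τ σ ∧ τ.card = σ.card}))}

/-- `Δ^p(K)`, computed with respect to the basis `f`. -/
def DeltaP {n : ℕ} (K : Finset (Finset (Fin n))) (f : Fin n → (Fin n → ℝ)) :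
    Set (Finset (Fin n)) := DeltaLt K f pLT

/-- `f` is a generic basis of `ℝ^n`: it is a basis, `f_1 = (1,…,1)`, and the coordinates of
`f_2, …, f_n` are algebraically independent over `ℚ`. -/
def GenericBasis {n : ℕ} (f : Fin n → (Fin n → ℝ)) : Prop :=
  (∃ b : Module.Basis (Fin n) ℝ (Fin n → ℝ), ⇑b = f) ∧
  (∀ i : Fin n, (i : ℕ) = 0 → f i = 1) ∧
  AlgebraicIndependent ℚ (fun x : {i : Fin n // (i : ℕ) ≠ 0} × Fin n => f x.1.1 x.2)

/-- The set `{1,3,4,…,d,n}` (1-based), i.e. `{0,2,3,…,d-1,n-1}` as a subset of `Fin n`. -/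
def sigma0 (d n : ℕ) : Finset (Fin n) :=
  Finset.univ.filter (fun i : Fin n =>
    (i : ℕ) = 0 ∨ (2 ≤ (i : ℕ) ∧ (i : ℕ) + 1 ≤ d) ∨ (i : ℕ) + 1 = n)

end Shifting

/-!
Fix `(v, i)`, and for a `(d-1)`-set `τ` let `D(τ)` be the determinant of the points of `τ`,
lifted by a last coordinate `1`, with their `i`-th coordinate deleted. Deleting row `i` and the
column of `v` from `M_{p,σ}` leaves the matrix of `D(σ ∖ v)`, so up to a sign depending only on
`i`, `𝔙_{(v,i),σ} = sign(σ ∖ v, σ) · D(σ ∖ v)`, which is the coboundary `δf(σ)` of the cochain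
`f = D · 1[v ∉ ·]`: if `v ∈ σ`, the facet `σ ∖ v` is the only one avoiding `v`; if `v ∉ σ`,
`δD(σ)` is, up to the same sign, the sum of the cofactors of row `i` of `M_{p,σ}`, i.e. the
determinant of `M_{p,σ}` with row `i` replaced by ones, which has two rows of ones.
Hence `𝔙 z = ±⟨δf, z⟩ = ±⟨f, ∂z⟩ = 0`.
-/

section Cofactor

lemma skipF_eq_succAbove {m : ℕ} (r : Fin (m + 1)) (k : Fin m) :
    skipF (d := m + 1) r k = r.succAbove k := by
  unfold skipF Fin.succAbove
  split_ifs <;> ext <;> simp_all [Fin.lt_def]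
  omega

lemma cofactor_eq_adjugate_apply {m : ℕ} (M : Matrix (Fin (m + 1)) (Fin (m + 1)) ℝ)
    (r c : Fin (m + 1)) : cofactor M r c = M.adjugate c r := by
  rw [cofactor, Matrix.adjugate_fin_succ_eq_det_submatrix]
  congr 2

lemma sum_cofactor_eq_zero_of_row_eq_one {m : ℕ} (M : Matrix (Fin (m + 1)) (Fin (m + 1)) ℝ)
    {r i : Fin (m + 1)} (hr : ∀ j, M r j = 1) (hi : i ≠ r) :
    ∑ j, cofactor M i j = 0 := by
  have h := congrFun (congrFun M.mul_adjugate r) i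
  simpa [Matrix.mul_apply, hr, cofactor_eq_adjugate_apply, Matrix.one_apply_ne hi.symm] using h

end Cofactor

lemma Finset.sum_erase_eq_sum_powersetCard {α β : Type*} [DecidableEq α] [AddCommMonoid β]
    {m : ℕ} (σ : Finset α) (hσ : σ.card = m + 1) (f : Finset α → β) :
    ∑ w ∈ σ, f (σ.erase w) = ∑ τ ∈ σ.powersetCard m, f τ := by
  refine Finset.sum_bij (fun w _ => σ.erase w) (fun w hw => ?_)
    (fun w hw w' hw' h => (Finset.erase_inj σ hw).1 h) (fun τ hτ => ?_) (fun _ _ => rfl)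
  · simp [Finset.mem_powersetCard, Finset.erase_subset, hw, hσ]
  · obtain ⟨hτσ, hτ⟩ := Finset.mem_powersetCard.1 hτ
    obtain ⟨w, hw⟩ : (σ \ τ).Nonempty := by
      rw [← Finset.card_pos, Finset.card_sdiff_of_subset hτσ]; omega
    obtain ⟨hwσ, hwτ⟩ := Finset.mem_sdiff.1 hw
    refine ⟨w, hwσ, (Finset.eq_of_subset_of_card_le ?_ ?_).symm⟩
    · exact fun x hx => Finset.mem_erase.2 ⟨fun h => hwτ (h ▸ hx), hτσ hx⟩
    · simp [hwσ, hσ, hτ]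

section OrderedFaces

variable {α : Type*} [LinearOrder α] {m : ℕ}

lemma faceSgn_erase (σ : Finset α) (hσ : σ.card = m) {v : α} (hv : v ∈ σ) :
    faceSgn (σ.erase v) σ = (-1) ^ ((((σ.orderIsoOfFin hσ).symm ⟨v, hv⟩ : Fin m) : ℕ) + 1) := by
  have hdiff : σ \ σ.erase v = {v} := Finset.sdiff_erase_self hv
  rw [faceSgn, dif_pos (by simp [hdiff])]
  simp only [hdiff, Finset.min'_singleton, Finset.orderIsoOfFin_symm_apply]

lemma orderEmbOfFin_succAbove (σ : Finset α) (hσ : σ.card = m + 1) {v : α} (hv : v ∈ σ)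
    (k : Fin m) :
    σ.orderEmbOfFin hσ (((σ.orderIsoOfFin hσ).symm ⟨v, hv⟩).succAbove k) =
      (σ.erase v).orderEmbOfFin (by simp [hv, hσ]) k := by
  set c := (σ.orderIsoOfFin hσ).symm ⟨v, hv⟩
  have hc : σ.orderEmbOfFin hσ c = v := by
    rw [← Finset.coe_orderIsoOfFin_apply, OrderIso.apply_symm_apply]
  have hmono : StrictMono (fun k : Fin m => σ.orderEmbOfFin hσ (c.succAbove k)) :=
    (σ.orderEmbOfFin hσ).strictMono.comp (Fin.strictMono_succAbove c)
  have hmem (k : Fin m) : σ.orderEmbOfFin hσ (c.succAbove k) ∈ σ.erase v := by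
    refine Finset.mem_erase.2 ⟨?_, Finset.orderEmbOfFin_mem _ _ _⟩
    rw [← hc]
    exact fun h => Fin.succAbove_ne c k ((σ.orderEmbOfFin hσ).injective h)
  exact congrFun (Finset.orderEmbOfFin_unique _ hmem hmono) k

end OrderedFaces

section Coboundary

variable {α : Type*} [LinearOrder α]

noncomputable def coboundary (f : Finset α → ℝ) (σ : Finset α) : ℝ :=
  ∑ w ∈ σ, (faceSgn (σ.erase w) σ : ℝ) * f (σ.erase w)

lemma sum_coboundary_mul_eq_sum_mul_boundary [Fintype α] (K : Finset (Finset α)) (m : ℕ)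
    (f z : Finset α → ℝ) :
    ∑ σ ∈ K.filter (·.card = m + 1), coboundary f σ * z σ =
      ∑ τ ∈ Finset.univ.powersetCard m, f τ *
        ∑ σ ∈ K.filter (fun σ => σ.card = m + 1 ∧ τ ⊆ σ), (faceSgn τ σ : ℝ) * z σ := by
  calc ∑ σ ∈ K.filter (·.card = m + 1), coboundary f σ * z σ
      = ∑ σ ∈ K.filter (·.card = m + 1), ∑ τ ∈ σ.powersetCard m,
          f τ * ((faceSgn τ σ : ℝ) * z σ) := by
        refine Finset.sum_congr rfl fun σ hσ => ?_
        rw [← Finset.sum_erase_eq_sum_powersetCard σ (Finset.mem_filter.1 hσ).2, coboundary,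
          Finset.sum_mul]
        exact Finset.sum_congr rfl fun _ _ => by ring
    _ = ∑ τ ∈ Finset.univ.powersetCard m,
          ∑ σ ∈ K.filter (fun σ => σ.card = m + 1 ∧ τ ⊆ σ), f τ * ((faceSgn τ σ : ℝ) * z σ) :=
        Finset.sum_comm' fun σ τ => by
          simp only [Finset.mem_filter, Finset.mem_powersetCard, Finset.subset_univ, true_and]
          tauto
    _ = _ := by simp only [Finset.mul_sum]

end Coboundary

section FaceMinor

variable {α : Type*} [LinearOrder α] {m : ℕ}

/-- For an `m`-set `τ`, the determinant of the `m × m` matrix whose columns are the points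
`(p w, 1)`, `w ∈ τ` in increasing order, with the `i`-th coordinate deleted. -/
noncomputable def faceMinor (p : α → Fin m → ℝ) (i : Fin m) (τ : Finset α) : ℝ :=
  if hτ : τ.card = m then
    (Matrix.of fun r k => if h : ((i.castSucc.succAbove r : Fin (m + 1)) : ℕ) < m then
      p (τ.orderEmbOfFin hτ k) ⟨_, h⟩ else 1).det
  else 0

lemma faceSgn_mul_faceMinor_erase (p : α → Fin m → ℝ) (i : Fin m) (σ : Finset α)
    (hσ : σ.card = m + 1) {v : α} (hv : v ∈ σ) :
    faceSgn (σ.erase v) σ * faceMinor p i (σ.erase v) =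
      -(-1) ^ (i : ℕ) * cofactor (faceMat (m + 1) p σ hσ) i.castSucc
        ((σ.orderIsoOfFin hσ).symm ⟨v, hv⟩) := by
  set c := (σ.orderIsoOfFin hσ).symm ⟨v, hv⟩
  have hminor : faceMinor p i (σ.erase v) =
      ((faceMat (m + 1) p σ hσ).submatrix (skipF i.castSucc) (skipF c)).det := by
    rw [faceMinor, dif_pos (by simp [hv, hσ])]
    congr 1
    ext r k
    simp only [Matrix.submatrix_apply, skipF_eq_succAbove, faceMat, Matrix.of_apply, c,
      orderEmbOfFin_succAbove σ hσ hv]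
    rfl
  have hsq : ((-1 : ℝ) ^ (i : ℕ)) ^ 2 = 1 := by
    rw [← pow_mul, mul_comm, pow_mul, neg_one_sq, one_pow]
  rw [faceSgn_erase σ hσ hv, hminor, cofactor, Fin.val_castSucc]
  push_cast
  linear_combination ((-1 : ℝ) ^ (c : ℕ) *
    ((faceMat (m + 1) p σ hσ).submatrix (skipF i.castSucc) (skipF c)).det) * hsq

lemma coboundary_faceMinor (p : α → Fin m → ℝ) (i : Fin m) (σ : Finset α)
    (hσ : σ.card = m + 1) : coboundary (faceMinor p i) σ = 0 := by
  have hlast (j : Fin (m + 1)) : faceMat (m + 1) p σ hσ (Fin.last m) j = 1 :=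
    dif_neg (by simp)
  calc coboundary (faceMinor p i) σ
      = ∑ w : σ, -(-1) ^ (i : ℕ) * cofactor (faceMat (m + 1) p σ hσ) i.castSucc
          ((σ.orderIsoOfFin hσ).symm w) := by
        rw [coboundary, ← Finset.sum_coe_sort]
        exact Finset.sum_congr rfl fun w _ => faceSgn_mul_faceMinor_erase p i σ hσ w.2
    _ = -(-1) ^ (i : ℕ) * ∑ j, cofactor (faceMat (m + 1) p σ hσ) i.castSucc j := by
        rw [Finset.mul_sum]
        exact Fintype.sum_equiv (σ.orderIsoOfFin hσ).symm.toEquiv _ _ fun _ => rfl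
    _ = 0 := by
        rw [sum_cofactor_eq_zero_of_row_eq_one _ hlast (Fin.castSucc_lt_last i).ne, mul_zero]

end FaceMinor

section VolumeRigidity

variable {α : Type*} [LinearOrder α] {m : ℕ}

lemma coboundary_indicator_faceMinor (K : Finset (Finset α)) (p : α → Fin m → ℝ) (v : α)
    (i : Fin m) (σ : {σ : Finset α // σ ∈ K ∧ σ.card = m + 1}) :
    coboundary ({τ | v ∉ τ}.indicator (faceMinor p i)) σ =
      -(-1) ^ (i : ℕ) * volMatrix (m + 1) K p (v, i) σ := by
  obtain ⟨σ, -, hσ⟩ := σ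
  by_cases hv : v ∈ σ
  · rw [coboundary, Finset.sum_eq_single_of_mem v hv fun w hw hwv => ?_]
    · rw [Set.indicator_of_mem (by simp), faceSgn_mul_faceMinor_erase p i σ hσ hv, volMatrix,
        dif_pos hv]
      rfl
    · rw [Set.indicator_of_notMem (by simp [Ne.symm hwv, hv]), mul_zero]
  · have havoid (w : α) : σ.erase w ∈ {τ | v ∉ τ} := fun h => hv (Finset.mem_of_mem_erase h)
    simp only [coboundary, Set.indicator_of_mem (havoid _)]
    rw [← coboundary, coboundary_faceMinor p i σ hσ, volMatrix, dif_neg hv, mul_zero]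

theorem sum_volMatrix_mul_eq_zero [Fintype α] (K : Finset (Finset α)) (p : α → Fin m → ℝ)
    (z : Finset α → ℝ) (hz : BoundaryZeroR (m + 1) K z) (v : α) (i : Fin m) :
    ∑ σ : {σ : Finset α // σ ∈ K ∧ σ.card = m + 1},
      volMatrix (m + 1) K p (v, i) σ * z σ = 0 := by
  set f := {τ : Finset α | v ∉ τ}.indicator (faceMinor p i)
  have hcycle : ∑ σ ∈ K.filter (·.card = m + 1), coboundary f σ * z σ = 0 := by
    rw [sum_coboundary_mul_eq_sum_mul_boundary]
    exact Finset.sum_eq_zero fun τ hτ => by rw [hz τ (Finset.mem_powersetCard.1 hτ).2, mul_zero]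
  rw [Finset.sum_subtype (p := fun σ => σ ∈ K ∧ σ.card = m + 1) _ (fun σ => Finset.mem_filter)
    fun σ => coboundary f σ * z σ] at hcycle
  simp only [f, coboundary_indicator_faceMinor, mul_assoc, ← Finset.mul_sum] at hcycle
  exact (mul_eq_zero.1 hcycle).resolve_left (by simp)

end VolumeRigidity

theorem volMatrix_mulVec_cycle_eq_zero_general (d n : ℕ)
    (K : Finset (Finset (Fin n)))
    (p : Fin n → Fin (d - 1) → ℝ) (z : Finset (Fin n) → ℝ)
    (hz : BoundaryZeroR d K z) :
    ∀ vi : Fin n × Fin (d - 1),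
      ∑ σ : {σ : Finset (Fin n) // σ ∈ K ∧ σ.card = d},
        volMatrix d K p vi σ * z σ.1 = 0 := by
  intro vi
  cases d with
  | zero => exact vi.2.elim0
  | succ m => exact sum_volMatrix_mul_eq_zero K p z hz vi.1 vi.2

/-- equation (3) in Lemma 3.4: any real `(d-1)`-cycle of `K` lies in the
kernel of the volume-rigidity matrix. -/
theorem volMatrix_mulVec_cycle_eq_zero (d n : ℕ) (hd : 2 ≤ d)
    (K : Finset (Finset (Fin n))) (hK : IsComplex K) (hpure : PureCx d K)
    (p : Fin n → Fin (d - 1) → ℝ) (z : Finset (Fin n) → ℝ)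
    (hz : BoundaryZeroR d K z) :
    ∀ vi : Fin n × Fin (d - 1),
      ∑ σ : {σ : Finset (Fin n) // σ ∈ K ∧ σ.card = d},
        volMatrix d K p vi σ * z σ.1 = 0 :=
  volMatrix_mulVec_cycle_eq_zero_general d n K p z hz
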